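/- Every definitive quartet set on leaf set {1, 2, …, n} (n ≥ 4) contains at least n − 3 quartets. -/

import Mathlib

/-- A phylogenetic tree on label set `L`: a finite tree whose degree-1 vertices
(leaves) are bijectively labelled by `L`, and whose interior (non-leaf) vertices
have degree at least 3 (in particular, there are no degree-2 vertices). -/
structure PhyloTree (L : Type) : Type 1 where
  V : Type
  finV : Finite V
  G : SimpleGraph V
  isTree : G.IsTree
  leaf : L → V
  leaf_inj : Function.Injective leaf
  leaf_deg : ∀ l, (G.neighborSet (leaf l)).ncard = 1
  leaf_of_deg_one : ∀ v, (G.neighborSet v).ncard = 1 → ∃ l, leaf l = v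
  interior_deg : ∀ v, (¬ ∃ l, leaf l = v) → 3 ≤ (G.neighborSet v).ncard

namespace PhyloTree

variable {L : Type}

/-- A vertex is interior if it is not a leaf. -/
def IsInterior (T : PhyloTree L) (v : T.V) : Prop := ¬ ∃ l, T.leaf l = v

/-- A phylogenetic tree is binary if every interior vertex has degree exactly 3. -/
def Binary (T : PhyloTree L) : Prop :=
  ∀ v, T.IsInterior v → (T.G.neighborSet v).ncard = 3

/-- `T` displays the quartet `uv|wx`: the path from `u` to `v` is
vertex-disjoint from the path from `w` to `x`. -/
def Displays (T : PhyloTree L) (u v w x : L) : Prop :=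
  ∀ (p : T.G.Walk (T.leaf u) (T.leaf v)) (q : T.G.Walk (T.leaf w) (T.leaf x)),
    p.IsPath → q.IsPath → ∀ a, a ∈ p.support → a ∉ q.support

/-- A quartet `uv|wx` encoded as the tuple `(u, v, w, x)`. -/
abbrev Quartet (L : Type) := L × L × L × L

/-- The set of leaves appearing in a quartet. -/
def qLeaves (q : Quartet L) : Set L := {q.1, q.2.1, q.2.2.1, q.2.2.2}

def DisplaysQ (T : PhyloTree L) (q : Quartet L) : Prop :=
  T.Displays q.1 q.2.1 q.2.2.1 q.2.2.2

def DisplaysSet (T : PhyloTree L) (Q : Set (Quartet L)) : Prop :=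
  ∀ q ∈ Q, T.DisplaysQ q

/-- The edge `e` of `T` separates `{u, v}` from `{w, x}`: after deleting `e`,
`u` and `v` are in one component and `w` and `x` in the other. -/
def Separates (T : PhyloTree L) (e : Sym2 T.V) (u v w x : L) : Prop :=
  e ∈ T.G.edgeSet ∧
  (T.G.deleteEdges {e}).Reachable (T.leaf u) (T.leaf v) ∧
  (T.G.deleteEdges {e}).Reachable (T.leaf w) (T.leaf x) ∧
  ¬ (T.G.deleteEdges {e}).Reachable (T.leaf u) (T.leaf w)

/-- The quartet `q = uv|wx` distinguishes the edge `e` of `T`: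
`e` is the unique cut-edge of `T` separating `{u,v}` from `{w,x}`. -/
def Distinguishes (T : PhyloTree L) (q : Quartet L) (e : Sym2 T.V) : Prop :=
  T.Separates e q.1 q.2.1 q.2.2.1 q.2.2.2 ∧
  ∀ e', T.Separates e' q.1 q.2.1 q.2.2.1 q.2.2.2 → e' = e

/-- An interior edge: both endpoints are interior vertices. -/
def InteriorEdge (T : PhyloTree L) (e : Sym2 T.V) : Prop :=
  e ∈ T.G.edgeSet ∧ ∀ v ∈ e, T.IsInterior v

/-- Label-preserving isomorphism of phylogenetic trees. -/
def PIso (T T' : PhyloTree L) : Prop :=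
  ∃ φ : T.V ≃ T'.V,
    (∀ a b, T.G.Adj a b ↔ T'.G.Adj (φ a) (φ b)) ∧ ∀ l, φ (T.leaf l) = T'.leaf l

/-- The quartet set `Q` defines `T`: `T` displays `Q` and is the unique
phylogenetic tree on the leaf set `L` doing so. -/
def Defines (Q : Set (Quartet L)) (T : PhyloTree L) : Prop :=
  T.DisplaysSet Q ∧ ∀ T' : PhyloTree L, T'.DisplaysSet Q → PIso T' T

end PhyloTree

/-- Adjacency of the caterpillar graph on `n` leaves (labels `Fin n`, so label
`i` of `{1,…,n}` corresponds to `i - 1 : Fin n`) with interior path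
`Fin (n-2)`: leaves `0,1` attach to interior vertex `0`, leaf `k`
(for `2 ≤ k ≤ n-3`) to interior vertex `k-1`, and leaves `n-2, n-1` to
interior vertex `n-3`. -/
def catAdj (n : ℕ) : (Fin n ⊕ Fin (n - 2)) → (Fin n ⊕ Fin (n - 2)) → Prop
  | Sum.inl k, Sum.inr j => (j : ℕ) = min ((k : ℕ) - 1) (n - 3)
  | Sum.inr j, Sum.inl k => (j : ℕ) = min ((k : ℕ) - 1) (n - 3)
  | Sum.inr j, Sum.inr j' => (j : ℕ) + 1 = (j' : ℕ) ∨ (j' : ℕ) + 1 = (j : ℕ)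
  | _, _ => False

/-- The caterpillar graph on `n` leaves. -/
def catGraph (n : ℕ) : SimpleGraph (Fin n ⊕ Fin (n - 2)) where
  Adj a b := catAdj n a b
  symm := by
    constructor
    rintro (k | j) (k' | j') h <;> simp only [catAdj] at h ⊢ <;> tauto
  loopless := by
    constructor
    rintro (k | j) h
    · exact h
    · simp only [catAdj] at h; omega

/-- `T` is a caterpillar tree whose leaf labelled `σ k` occupies position `k`
(positions as in `catGraph`). -/
def IsCatWith {n : ℕ} (T : PhyloTree (Fin n)) (σ : Fin n → Fin n) : Prop :=
  ∃ φ : T.V ≃ (Fin n ⊕ Fin (n - 2)),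
    (∀ a b, T.G.Adj a b ↔ (catGraph n).Adj (φ a) (φ b)) ∧
    ∀ k, φ (T.leaf (σ k)) = Sum.inl k

/-- `T` is the caterpillar tree `T_n` on labels `{1,…,n}` (as `Fin n`). -/
def IsCaterpillar {n : ℕ} (T : PhyloTree (Fin n)) : Prop := IsCatWith T id

/-!
Let `Q` define `T`. If an interior vertex `v` had degree at least four, moving two of its edges to
a new vertex adjacent to `v` would give a tree with one more vertex that still displays every
quartet of `Q`; hence `T` is binary, and a binary tree with `n` leaves has `n - 3` interior edges.
Say that `uv|wx` crosses the edge `ab` if `a` lies on the `u`–`v` path and `b` on the `w`–`x` path.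
If no quartet of `Q` crossed an interior edge, contracting that edge would give a smaller tree
still displaying `Q`. Conversely, a quartet displayed by `T` crosses at most one edge, because its
two paths are disjoint and a second edge between them would close a cycle. So the interior edges
inject into `Q`.
-/

open SimpleGraph

theorem Nat.card_subtype_ne_add_one {α : Type*} [Finite α] (b : α) :
    Nat.card {y : α // y ≠ b} + 1 = Nat.card α := by
  have := Fintype.ofFinite α
  classical
  have : 0 < Fintype.card α := Fintype.card_pos_iff.mpr ⟨b⟩
  simp only [Nat.card_eq_fintype_card, Fintype.card_subtype_compl, Fintype.card_unique]
  omega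

namespace SimpleGraph

variable {V V' : Type*} {G : SimpleGraph V} {G' : SimpleGraph V'}

def Walk.flatMapAdj (f : V → V') (F : ∀ ⦃a b : V⦄, G.Adj a b → G'.Walk (f a) (f b)) :
    ∀ {u v : V}, G.Walk u v → G'.Walk (f u) (f v)
  | _, _, .nil => .nil
  | _, _, .cons h p => (F h).append (p.flatMapAdj f F)

theorem Walk.mem_support_flatMapAdj {f : V → V'}
    {F : ∀ ⦃a b : V⦄, G.Adj a b → G'.Walk (f a) (f b)} {P : V' → Prop}
    (hF : ∀ ⦃a b : V⦄ (h : G.Adj a b), ∀ z ∈ (F h).support, z = f a ∨ z = f b ∨ P z)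
    {u v : V} (p : G.Walk u v) {z : V'} (hz : z ∈ (p.flatMapAdj f F).support) :
    (∃ t ∈ p.support, f t = z) ∨ P z := by
  induction p with
  | nil => exact Or.inl ⟨_, List.mem_singleton_self _, (List.mem_singleton.mp hz).symm⟩
  | @cons a b c h p ih =>
    rw [flatMapAdj, mem_support_append_iff] at hz
    rcases hz with hz | hz
    · rcases hF h z hz with rfl | rfl | hz
      · exact Or.inl ⟨a, p.support.mem_cons_self, rfl⟩
      · exact Or.inl ⟨b, List.mem_cons_of_mem _ p.start_mem_support, rfl⟩
      · exact Or.inr hz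
    · rcases ih hz with ⟨t, ht, rfl⟩ | hz
      · exact Or.inl ⟨t, List.mem_cons_of_mem _ ht, rfl⟩
      · exact Or.inr hz

theorem isTree_of_connected_of_ncard_edgeSet_add_one_le [Finite V] (hG : G.Connected)
    (h : G.edgeSet.ncard + 1 ≤ Nat.card V) : G.IsTree := by
  rw [← Nat.card_coe_set_eq] at h
  exact isTree_iff_connected_and_card.mpr
    ⟨hG, le_antisymm h hG.card_vert_le_card_edgeSet_add_one⟩

theorem IsTree.ncard_edgeSet_add_one [Finite V] (hG : G.IsTree) :
    G.edgeSet.ncard + 1 = Nat.card V := by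
  rw [← Nat.card_coe_set_eq]
  exact (isTree_iff_connected_and_card.mp hG).2

theorem IsAcyclic.not_adj_of_adj_of_adj (hG : G.IsAcyclic) {a b c : V} (hab : G.Adj a b)
    (hbc : G.Adj b c) : ¬ G.Adj a c :=
  fun hac => by
    classical
    exact hG.cliqueFree le_rfl {a, b, c} (is3Clique_triple_iff.mpr ⟨hab, hac, hbc⟩)

theorem IsAcyclic.support_subset_of_isPath (hG : G.IsAcyclic) {u v : V} {p : G.Walk u v}
    (hp : p.IsPath) (w : G.Walk u v) : p.support ⊆ w.support := by
  classical
  have hpw : p = w.bypass :=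
    congrArg Subtype.val ((hG.subsingleton_path u v).elim ⟨p, hp⟩ ⟨_, w.bypass_isPath⟩)
  exact hpw ▸ w.support_bypass_subset_support

theorem IsAcyclic.eq_of_adj_of_disjoint {u v w x : V} (hG : G.IsAcyclic) (p : G.Walk u v)
    (q : G.Walk w x) (hpq : ∀ z ∈ p.support, z ∉ q.support) {a b a' b' : V}
    (hab : G.Adj a b) (hab' : G.Adj a' b') (ha : a ∈ p.support) (hb : b ∈ q.support)
    (ha' : a' ∈ p.support) (hb' : b' ∈ q.support) : s(a, b) = s(a', b') := by
  classical
  by_contra hne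
  -- The walks and the edge `a'b'` give a walk from `a` to `b` avoiding the bridge `ab`.
  have hbridge :=
    isBridge_iff_forall_walk_mem_edges.mp (isAcyclic_iff_forall_adj_isBridge.mp hG hab)
  have hp : ∀ {c} (hc : c ∈ p.support), s(a, b) ∉ (p.takeUntil c hc).edges := fun hc he =>
    hpq b (p.snd_mem_support_of_mem_edges (p.edges_takeUntil_subset_edges hc he)) hb
  have hq : ∀ {c} (hc : c ∈ q.support), s(a, b) ∉ (q.takeUntil c hc).edges := fun hc he =>
    hpq a ha (q.fst_mem_support_of_mem_edges (q.edges_takeUntil_subset_edges hc he))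
  have := hbridge (((p.takeUntil a ha).reverse.append (p.takeUntil a' ha')).append
    (.cons hab' ((q.takeUntil b' hb').reverse.append (q.takeUntil b hb))))
  simp only [Walk.edges_append, Walk.edges_reverse, Walk.edges_cons, List.mem_append,
    List.mem_reverse, List.mem_cons] at this
  rcases this with (h | h) | h | h | h
  · exact hp ha h
  · exact hp ha' h
  · exact hne h
  · exact hq hb' h
  · exact hq hb h

theorem Walk.IsPath.exists_adj_ne_of_mem_support [DecidableEq V] {u v z : V} {p : G.Walk u v}
    (hp : p.IsPath) (hz : z ∈ p.support) (hu : z ≠ u) (hv : z ≠ v) :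
    ∃ s t, s ≠ t ∧ G.Adj z s ∧ G.Adj z t ∧ s ∈ p.support ∧ t ∈ p.support := by
  have hnodup := hp.support_nodup
  rw [← p.take_spec hz, support_append] at hnodup
  have h1 : ¬ (p.takeUntil z hz).Nil := not_nil_of_ne hu.symm
  have h2 : ¬ (p.dropUntil z hz).Nil := not_nil_of_ne hv
  refine ⟨_, _, fun he => ?_, (adj_penultimate h1).symm, adj_snd h2,
    p.support_takeUntil_subset_support hz (getVert_mem_support _ _),
    p.support_dropUntil_subset_support hz (getVert_mem_support _ _)⟩
  exact List.disjoint_of_nodup_append hnodup (getVert_mem_support _ _)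
    (he ▸ snd_mem_tail_support h2)

theorem sum_ncard_neighborSet [Fintype V] :
    ∑ v, (G.neighborSet v).ncard = 2 * G.edgeSet.ncard := by
  classical
  rw [← coe_edgeFinset, Set.ncard_coe_finset, ← sum_degrees_eq_twice_card_edges]
  refine Finset.sum_congr rfl fun v _ => ?_
  rw [← card_neighborSet_eq_degree, Set.ncard_eq_toFinset_card', Set.toFinset_card]

theorem Walk.mem_of_forall_adj_mem {S : Set V} (hS : ∀ a ∈ S, ∀ b, G.Adj a b → b ∈ S)
    {u v : V} (p : G.Walk u v) (hu : u ∈ S) : v ∈ S := by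
  induction p with
  | nil => exact hu
  | cons h p ih => exact ih (hS _ hu _ h)

end SimpleGraph

namespace PhyloTree

variable {L : Type} (T : PhyloTree L)

instance : Finite T.V := T.finV

theorem leaf_ne_of_isInterior {v : T.V} (hv : T.IsInterior v) (l : L) : T.leaf l ≠ v :=
  fun h => hv ⟨l, h⟩

noncomputable def path (l l' : L) : T.G.Walk (T.leaf l) (T.leaf l') :=
  (T.isTree.existsUnique_path _ _).choose

theorem path_isPath (l l' : L) : (T.path l l').IsPath :=
  (T.isTree.existsUnique_path _ _).choose_spec.1

def Crosses (q : Quartet L) (e : Sym2 T.V) : Prop :=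
  ∃ a b, e = s(a, b) ∧ a ∈ (T.path q.1 q.2.1).support ∧ b ∈ (T.path q.2.2.1 q.2.2.2).support

section Contract

variable {T} {a b : T.V}

open Classical in
noncomputable def contractMap (hab : a ≠ b) (x : T.V) : {y : T.V // y ≠ b} :=
  if h : x = b then ⟨a, hab⟩ else ⟨x, h⟩

theorem contractMap_of_ne (hab : a ≠ b) {x : T.V} (hx : x ≠ b) :
    contractMap hab x = ⟨x, hx⟩ :=
  dif_neg hx

theorem contractMap_self (hab : a ≠ b) : contractMap hab b = ⟨a, hab⟩ :=
  dif_pos rfl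

open Classical in
theorem coe_contractMap (hab : a ≠ b) (x : T.V) :
    (contractMap hab x : T.V) = if x = b then a else x := by
  unfold contractMap; split_ifs <;> rfl

theorem eq_or_of_contractMap_eq (hab : a ≠ b) {x y : T.V}
    (h : contractMap hab x = contractMap hab y) :
    x = y ∨ (x = a ∧ y = b) ∨ (x = b ∧ y = a) := by
  unfold contractMap at h
  split_ifs at h with hx hy hy <;> simp only [Subtype.mk.injEq] at h <;> grind

theorem contractMap_injOn (hab : a ≠ b) {s : Set T.V} (hs : a ∉ s ∨ b ∉ s) :
    Set.InjOn (contractMap hab) s := by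
  intro x hx y hy h
  rcases eq_or_of_contractMap_eq hab h with h | ⟨rfl, rfl⟩ | ⟨rfl, rfl⟩ <;> tauto

variable (T) in
def contractGraph (hab : a ≠ b) : SimpleGraph {y : T.V // y ≠ b} where
  Adj x y := x ≠ y ∧ ∃ x₀ y₀, T.G.Adj x₀ y₀ ∧ contractMap hab x₀ = x ∧ contractMap hab y₀ = y
  symm := ⟨fun _ _ ⟨hne, x₀, y₀, h, hx, hy⟩ => ⟨hne.symm, y₀, x₀, h.symm, hy, hx⟩⟩
  loopless := ⟨fun _ h => h.1 rfl⟩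

variable (hab : T.G.Adj a b)

open Classical in
noncomputable def contractStep {x y : T.V} (h : T.G.Adj x y) :
    (contractGraph T hab.ne).Walk (contractMap hab.ne x) (contractMap hab.ne y) :=
  if he : contractMap hab.ne x = contractMap hab.ne y then Walk.nil.copy rfl he
  else (show (contractGraph T hab.ne).Adj _ _ from ⟨he, x, y, h, rfl, rfl⟩).toWalk

noncomputable def contractWalk {u v : T.V} (p : T.G.Walk u v) :
    (contractGraph T hab.ne).Walk (contractMap hab.ne u) (contractMap hab.ne v) :=
  p.flatMapAdj (contractMap hab.ne) fun _ _ h => contractStep hab h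

theorem mem_support_contractWalk {u v : T.V} (p : T.G.Walk u v) {z : {y : T.V // y ≠ b}}
    (hz : z ∈ (contractWalk hab p).support) : ∃ t ∈ p.support, contractMap hab.ne t = z := by
  refine (Walk.mem_support_flatMapAdj (P := fun _ => False) (fun x y h z hz => ?_) p
    hz).resolve_right id
  unfold contractStep at hz
  split_ifs at hz <;> simp at hz <;> tauto

theorem contractGraph_connected : (contractGraph T hab.ne).Connected := by
  have : Nonempty {y : T.V // y ≠ b} := ⟨⟨a, hab.ne⟩⟩
  refine .mk fun ⟨x, hx⟩ ⟨y, hy⟩ => ?_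
  have := (contractWalk hab (T.isTree.connected x y).some).reachable
  rwa [contractMap_of_ne hab.ne hx, contractMap_of_ne hab.ne hy] at this

theorem contractGraph_ncard_edgeSet_add_one_le :
    (contractGraph T hab.ne).edgeSet.ncard + 1 ≤ Nat.card {y : T.V // y ≠ b} := by
  have hsub : (contractGraph T hab.ne).edgeSet ⊆
      Sym2.map (contractMap hab.ne) '' (T.G.edgeSet \ {s(a, b)}) := by
    intro e he
    induction e with
    | _ x y =>
      obtain ⟨hne, x₀, y₀, h, rfl, rfl⟩ : (contractGraph T hab.ne).Adj x y := he
      refine ⟨s(x₀, y₀), ⟨h, fun hab' => hne ?_⟩, rfl⟩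
      rcases Sym2.eq_iff.mp hab' with ⟨rfl, rfl⟩ | ⟨rfl, rfl⟩ <;>
        simp [contractMap_self, contractMap_of_ne hab.ne hab.ne]
  have hE : (T.G.edgeSet \ {s(a, b)}).ncard + 1 = T.G.edgeSet.ncard :=
    Set.ncard_sdiff_singleton_add_one hab (Set.toFinite _)
  have := (Set.ncard_le_ncard hsub (Set.toFinite _)).trans (Set.ncard_image_le (Set.toFinite _))
  have := T.isTree.ncard_edgeSet_add_one
  have := Nat.card_subtype_ne_add_one b
  omega

theorem contractGraph_isTree : (contractGraph T hab.ne).IsTree :=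
  isTree_of_connected_of_ncard_edgeSet_add_one_le (contractGraph_connected hab)
    (contractGraph_ncard_edgeSet_add_one_le hab)

theorem neighborSet_contractGraph_of_ne {x : T.V} (hxa : x ≠ a) (hxb : x ≠ b) :
    (contractGraph T hab.ne).neighborSet ⟨x, hxb⟩ = contractMap hab.ne '' T.G.neighborSet x := by
  ext ⟨y, hyb⟩
  simp only [mem_neighborSet, Set.mem_image, contractGraph, ne_eq, Subtype.ext_iff,
    coe_contractMap]
  constructor
  · rintro ⟨hne, x₀, y₀, h, hx, hy⟩
    split_ifs at hx with h'
    · exact (hxa hx.symm).elim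
    · subst hx; exact ⟨y₀, h, hy⟩
  · rintro ⟨y₀, h, hy⟩
    refine ⟨?_, x, y₀, h, by simp [hxb], hy⟩
    split_ifs at hy with h' <;> grind [h.ne]

theorem neighborSet_contractGraph_left :
    (contractGraph T hab.ne).neighborSet ⟨a, hab.ne⟩ =
      contractMap hab.ne '' ((T.G.neighborSet a \ {b}) ∪ (T.G.neighborSet b \ {a})) := by
  ext ⟨y, hyb⟩
  simp only [mem_neighborSet, Set.mem_image, contractGraph, ne_eq, Subtype.ext_iff,
    coe_contractMap, Set.mem_union, Set.mem_sdiff, Set.mem_singleton_iff]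
  constructor
  · rintro ⟨hne, x₀, y₀, h, hx, hy⟩
    split_ifs at hx hy <;> grind
  · rintro ⟨y₀, h, hy⟩
    rcases h with ⟨h, h'⟩ | ⟨h, h'⟩
    · refine ⟨?_, a, y₀, h, by simp [hab.ne], hy⟩
      split_ifs at hy; grind [h.ne]
    · refine ⟨?_, b, y₀, h, by simp, hy⟩
      split_ifs at hy <;> grind [h.ne]

theorem ncard_neighborSet_contractGraph_of_ne {x : T.V} (hxa : x ≠ a) (hxb : x ≠ b) :
    ((contractGraph T hab.ne).neighborSet ⟨x, hxb⟩).ncard = (T.G.neighborSet x).ncard := by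
  rw [neighborSet_contractGraph_of_ne hab hxa hxb, (contractMap_injOn hab.ne _).ncard_image]
  exact not_and_or.mp fun ⟨ha, hb⟩ => T.isTree.isAcyclic.not_adj_of_adj_of_adj ha hab hb

theorem four_le_ncard_neighborSet_contractGraph (ha : T.IsInterior a) (hb : T.IsInterior b) :
    4 ≤ ((contractGraph T hab.ne).neighborSet ⟨a, hab.ne⟩).ncard := by
  have hdisj : Disjoint (T.G.neighborSet a \ {b}) (T.G.neighborSet b \ {a}) :=
    Set.disjoint_left.mpr fun y ⟨hay, _⟩ ⟨hby, _⟩ =>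
      T.isTree.isAcyclic.not_adj_of_adj_of_adj hab hby hay
  rw [neighborSet_contractGraph_left hab,
    (contractMap_injOn hab.ne (Or.inl (by simp))).ncard_image, Set.ncard_union_eq hdisj,
    Set.ncard_sdiff_singleton_of_mem (show b ∈ T.G.neighborSet a from hab),
    Set.ncard_sdiff_singleton_of_mem (show a ∈ T.G.neighborSet b from hab.symm)]
  have := T.interior_deg a ha
  have := T.interior_deg b hb
  omega

noncomputable def contract (ha : T.IsInterior a) (hb : T.IsInterior b) : PhyloTree L where
  V := {y : T.V // y ≠ b}
  finV := inferInstance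
  G := contractGraph T hab.ne
  isTree := contractGraph_isTree hab
  leaf l := contractMap hab.ne (T.leaf l)
  leaf_inj l l' h := by
    dsimp only at h
    rw [contractMap_of_ne hab.ne (T.leaf_ne_of_isInterior hb l),
      contractMap_of_ne hab.ne (T.leaf_ne_of_isInterior hb l')] at h
    exact T.leaf_inj (congrArg Subtype.val h)
  leaf_deg l := by
    rw [contractMap_of_ne hab.ne (T.leaf_ne_of_isInterior hb l),
      ncard_neighborSet_contractGraph_of_ne hab (T.leaf_ne_of_isInterior ha l)]
    exact T.leaf_deg l
  leaf_of_deg_one := by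
    rintro ⟨x, hxb⟩ hx
    by_cases hxa : x = a
    · subst hxa
      have := four_le_ncard_neighborSet_contractGraph hab ha hb
      omega
    · rw [ncard_neighborSet_contractGraph_of_ne hab hxa] at hx
      obtain ⟨l, rfl⟩ := T.leaf_of_deg_one x hx
      exact ⟨l, contractMap_of_ne hab.ne hxb⟩
  interior_deg := by
    rintro ⟨x, hxb⟩ hx
    by_cases hxa : x = a
    · subst hxa
      have := four_le_ncard_neighborSet_contractGraph hab ha hb
      omega
    · rw [ncard_neighborSet_contractGraph_of_ne hab hxa]
      exact T.interior_deg x fun ⟨l, hl⟩ => hx ⟨l, hl ▸ contractMap_of_ne hab.ne hxb⟩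

variable (ha : T.IsInterior a) (hb : T.IsInterior b)

theorem card_contract_add_one : Nat.card (T.contract hab ha hb).V + 1 = Nat.card T.V :=
  Nat.card_subtype_ne_add_one b

theorem exists_mem_path_of_mem_support_contract {l l' : L}
    {p : (T.contract hab ha hb).G.Walk ((T.contract hab ha hb).leaf l)
      ((T.contract hab ha hb).leaf l')}
    (hp : p.IsPath) {z : (T.contract hab ha hb).V} (hz : z ∈ p.support) :
    ∃ t ∈ (T.path l l').support, contractMap hab.ne t = z :=
  mem_support_contractWalk hab (T.path l l')
    ((T.contract hab ha hb).isTree.isAcyclic.support_subset_of_isPath hp _ hz)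

theorem displaysSet_contract {Q : Set (Quartet L)} (hQ : T.DisplaysSet Q)
    (hcross : ∀ q ∈ Q, ¬ T.Crosses q s(a, b)) : (T.contract hab ha hb).DisplaysSet Q := by
  intro q hq p r hp hr z hzp hzr
  obtain ⟨t, ht, rfl⟩ := exists_mem_path_of_mem_support_contract hab ha hb hp hzp
  obtain ⟨t', ht', htt'⟩ := exists_mem_path_of_mem_support_contract hab ha hb hr hzr
  rcases eq_or_of_contractMap_eq hab.ne htt' with rfl | ⟨rfl, rfl⟩ | ⟨rfl, rfl⟩
  · exact hQ q hq _ _ (T.path_isPath _ _) (T.path_isPath _ _) t' ht ht'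
  · exact hcross q hq ⟨_, _, Sym2.eq_swap, ht, ht'⟩
  · exact hcross q hq ⟨_, _, rfl, ht, ht'⟩

end Contract

section Refine

/-- Splitting `v`: the new vertex `inr ()` takes over the edges `vx` and `vy` and is joined to `v`.
-/
def refineAdj (v x y : T.V) : T.V ⊕ Unit → T.V ⊕ Unit → Prop
  | .inl p, .inl q => T.G.Adj p q ∧ s(p, q) ≠ s(v, x) ∧ s(p, q) ≠ s(v, y)
  | .inl p, .inr _ => p = v ∨ p = x ∨ p = y
  | .inr _, .inl q => q = v ∨ q = x ∨ q = y
  | .inr _, .inr _ => False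

def refineGraph (v x y : T.V) : SimpleGraph (T.V ⊕ Unit) where
  Adj := T.refineAdj v x y
  symm := ⟨by
    rintro (p | _) (q | _) h <;> simp only [refineAdj] at h ⊢
    exacts [⟨h.1.symm, Sym2.eq_swap (a := q) ▸ h.2⟩, h, h]⟩
  loopless := ⟨by rintro (p | _) h <;> simp only [refineAdj] at h; exact h.1.ne rfl⟩

variable {T} {v x y : T.V}

theorem refineGraph_comm : T.refineGraph v x y = T.refineGraph v y x := by
  ext (p | _) (q | _) <;> simp only [refineGraph, refineAdj] <;> tauto

theorem refineGraph_adj_inl_inr {p : T.V} :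
    (T.refineGraph v x y).Adj (.inl p) (.inr ()) ↔ p = v ∨ p = x ∨ p = y :=
  Iff.rfl

open Classical in
noncomputable def refineStep {p q : T.V} (h : T.G.Adj p q) :
    (T.refineGraph v x y).Walk (.inl p) (.inl q) :=
  if hs : s(p, q) = s(v, x) ∨ s(p, q) = s(v, y) then
    have hmem : ∀ {r}, r ∈ s(p, q) → r = v ∨ r = x ∨ r = y := fun hr => by
      rcases hs with hs | hs <;> rw [hs, Sym2.mem_iff] at hr <;> tauto
    .cons (refineGraph_adj_inl_inr.mpr (hmem (Sym2.mem_mk_left p q)))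
      (refineGraph_adj_inl_inr.mpr (hmem (Sym2.mem_mk_right p q))).symm.toWalk
  else (show (T.refineGraph v x y).Adj (.inl p) (.inl q) from ⟨h, not_or.mp hs⟩).toWalk

noncomputable def refineWalk {a b : T.V} (p : T.G.Walk a b) :
    (T.refineGraph v x y).Walk (.inl a) (.inl b) :=
  p.flatMapAdj Sum.inl fun _ _ h => refineStep h

theorem mem_support_refineWalk {a b : T.V} (p : T.G.Walk a b) {z : T.V ⊕ Unit}
    (hz : z ∈ (refineWalk (v := v) (x := x) (y := y) p).support) :
    (∃ t ∈ p.support, .inl t = z) ∨ z = .inr () := by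
  refine Walk.mem_support_flatMapAdj (P := (· = .inr ())) (fun p q h z hz => ?_) p hz
  unfold refineStep at hz
  split_ifs at hz <;> simp at hz <;> tauto

theorem refineGraph_connected : (T.refineGraph v x y).Connected := by
  have key : ∀ t, (T.refineGraph v x y).Reachable (.inl t) (.inr ()) := fun t =>
    (refineWalk (T.isTree.connected t v).some).reachable.trans
      (refineGraph_adj_inl_inr.mpr (Or.inl rfl)).reachable
  refine .mk fun s t => ?_
  rcases s with s | ⟨⟩ <;> rcases t with t | ⟨⟩
  exacts [(key s).trans (key t).symm, key s, (key t).symm, .rfl]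

theorem refineGraph_ncard_edgeSet_add_one_le (hx : T.G.Adj v x) (hy : T.G.Adj v y)
    (hxy : x ≠ y) :
    (T.refineGraph v x y).edgeSet.ncard + 1 ≤ Nat.card (T.V ⊕ Unit) := by
  have hsub : (T.refineGraph v x y).edgeSet ⊆
      Sym2.map Sum.inl '' (T.G.edgeSet \ {s(v, x), s(v, y)}) ∪
        {s(.inl v, .inr ()), s(.inl x, .inr ()), s(.inl y, .inr ())} := by
    rintro ⟨p | _, q | _⟩ h
    · exact Or.inl ⟨s(p, q), ⟨h.1, by simpa using h.2⟩, rfl⟩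
    · rcases h with rfl | rfl | rfl <;> simp
    · rcases h with rfl | rfl | rfl <;> simp [Sym2.eq_swap]
    · exact h.elim
  have hpair : ({s(v, x), s(v, y)} : Set (Sym2 T.V)).ncard = 2 :=
    Set.ncard_pair (by simp [hxy, hx.ne'])
  have hdiff := Set.ncard_sdiff_add_ncard_of_subset (s := {s(v, x), s(v, y)}) (t := T.G.edgeSet)
    (by simp [Set.insert_subset_iff, hx, hy])
  have htriple : ({s(.inl v, .inr ()), s(.inl x, .inr ()), s(.inl y, .inr ())} :
      Set (Sym2 (T.V ⊕ Unit))).ncard ≤ 3 := by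
    grw [Set.ncard_insert_le, Set.ncard_insert_le, Set.ncard_singleton]
  have := (Set.ncard_le_ncard hsub).trans ((Set.ncard_union_le _ _).trans
    (Nat.add_le_add_right (Set.ncard_image_le (Set.toFinite _)) _))
  have := T.isTree.ncard_edgeSet_add_one
  rw [Nat.card_sum, Nat.card_eq_fintype_card (α := Unit), Fintype.card_unit]
  omega

theorem neighborSet_refineGraph_inr :
    (T.refineGraph v x y).neighborSet (.inr ()) = {.inl v, .inl x, .inl y} := by
  ext (t | _) <;> simp [refineGraph, refineAdj]

theorem neighborSet_refineGraph_inl_self (hx : T.G.Adj v x) (hy : T.G.Adj v y) :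
    (T.refineGraph v x y).neighborSet (.inl v) =
      Sum.inl '' (T.G.neighborSet v \ {x, y}) ∪ {.inr ()} := by
  ext (t | _) <;> simp [refineGraph, refineAdj, hx.ne, hy.ne]

theorem neighborSet_refineGraph_inl_left (hx : T.G.Adj v x) (hxy : x ≠ y) :
    (T.refineGraph v x y).neighborSet (.inl x) =
      Sum.inl '' (T.G.neighborSet x \ {v}) ∪ {.inr ()} := by
  ext (t | _) <;> simp [refineGraph, refineAdj, hx.ne', hxy]

theorem neighborSet_refineGraph_inl_of_ne {t : T.V} (hv : t ≠ v) (hx : t ≠ x) (hy : t ≠ y) :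
    (T.refineGraph v x y).neighborSet (.inl t) = Sum.inl '' T.G.neighborSet t := by
  ext (s | _) <;> simp [refineGraph, refineAdj, hv, hx, hy]

theorem ncard_image_inl_union_inr (s : Set T.V) :
    (Sum.inl '' s ∪ {.inr ()} : Set (T.V ⊕ Unit)).ncard = s.ncard + 1 := by
  rw [Set.ncard_union_eq (by simp) (Set.toFinite _) (Set.toFinite _),
    Set.ncard_image_of_injective _ Sum.inl_injective, Set.ncard_singleton]

theorem ncard_neighborSet_refineGraph_inl_left (hx : T.G.Adj v x) (hxy : x ≠ y) :
    ((T.refineGraph v x y).neighborSet (.inl x)).ncard = (T.G.neighborSet x).ncard := by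
  rw [neighborSet_refineGraph_inl_left hx hxy, ncard_image_inl_union_inr,
    Set.ncard_sdiff_singleton_add_one (show v ∈ T.G.neighborSet x from hx.symm)]

theorem ncard_neighborSet_refineGraph_inl_of_ne (hx : T.G.Adj v x) (hy : T.G.Adj v y)
    (hxy : x ≠ y) {t : T.V} (hv : t ≠ v) :
    ((T.refineGraph v x y).neighborSet (.inl t)).ncard = (T.G.neighborSet t).ncard := by
  by_cases htx : t = x
  · subst htx
    exact ncard_neighborSet_refineGraph_inl_left hx hxy
  by_cases hty : t = y
  · subst hty
    rw [refineGraph_comm]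
    exact ncard_neighborSet_refineGraph_inl_left hy hxy.symm
  rw [neighborSet_refineGraph_inl_of_ne hv htx hty,
    Set.ncard_image_of_injective _ Sum.inl_injective]

theorem ncard_neighborSet_refineGraph_inl_self (hx : T.G.Adj v x) (hy : T.G.Adj v y)
    (hxy : x ≠ y) :
    ((T.refineGraph v x y).neighborSet (.inl v)).ncard + 1 = (T.G.neighborSet v).ncard := by
  rw [neighborSet_refineGraph_inl_self hx hy, ncard_image_inl_union_inr]
  have := Set.ncard_sdiff_add_ncard_of_subset (s := {x, y}) (t := T.G.neighborSet v)
    (by simp [Set.insert_subset_iff, hx, hy])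
  rw [Set.ncard_pair hxy] at this
  omega

theorem ncard_neighborSet_refineGraph_inr (hx : T.G.Adj v x) (hy : T.G.Adj v y) (hxy : x ≠ y) :
    ((T.refineGraph v x y).neighborSet (.inr ())).ncard = 3 := by
  rw [neighborSet_refineGraph_inr, Set.ncard_eq_three]
  exact ⟨_, _, _, by simp [hx.ne], by simp [hy.ne], by simp [hxy], rfl⟩

variable (hx : T.G.Adj v x) (hy : T.G.Adj v y) (hxy : x ≠ y)
  (hdeg : 4 ≤ (T.G.neighborSet v).ncard)
include hdeg

theorem leaf_ne_of_four_le (l : L) : T.leaf l ≠ v := by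
  rintro rfl
  have := T.leaf_deg l
  omega

noncomputable def refine : PhyloTree L where
  V := T.V ⊕ Unit
  finV := inferInstance
  G := T.refineGraph v x y
  isTree := isTree_of_connected_of_ncard_edgeSet_add_one_le refineGraph_connected
    (refineGraph_ncard_edgeSet_add_one_le hx hy hxy)
  leaf l := .inl (T.leaf l)
  leaf_inj _ _ h := T.leaf_inj (Sum.inl_injective h)
  leaf_deg l := by
    rw [ncard_neighborSet_refineGraph_inl_of_ne hx hy hxy (leaf_ne_of_four_le hdeg l)]
    exact T.leaf_deg l
  leaf_of_deg_one := by
    rintro (t | ⟨⟩) h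
    · by_cases htv : t = v
      · have := ncard_neighborSet_refineGraph_inl_self hx hy hxy
        subst htv
        omega
      · rw [ncard_neighborSet_refineGraph_inl_of_ne hx hy hxy htv] at h
        obtain ⟨l, rfl⟩ := T.leaf_of_deg_one t h
        exact ⟨l, rfl⟩
    · have := (ncard_neighborSet_refineGraph_inr hx hy hxy).symm.trans h
      omega
  interior_deg := by
    rintro (t | ⟨⟩) h
    · by_cases htv : t = v
      · have := ncard_neighborSet_refineGraph_inl_self hx hy hxy
        subst htv
        omega
      · rw [ncard_neighborSet_refineGraph_inl_of_ne hx hy hxy htv]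
        exact T.interior_deg t fun ⟨l, hl⟩ => h ⟨l, by rw [hl]⟩
    · exact (ncard_neighborSet_refineGraph_inr hx hy hxy).ge

theorem card_refine : Nat.card (T.refine hx hy hxy hdeg).V = Nat.card T.V + 1 := by
  rw [refine, Nat.card_sum, Nat.card_eq_fintype_card (α := Unit), Fintype.card_unit]

theorem exists_mem_path_of_mem_support_refine {l l' : L}
    {p : (T.refine hx hy hxy hdeg).G.Walk (.inl (T.leaf l)) (.inl (T.leaf l'))} (hp : p.IsPath)
    {z : T.V ⊕ Unit} (hz : z ∈ p.support) :
    (∃ t ∈ (T.path l l').support, .inl t = z) ∨ z = .inr () :=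
  mem_support_refineWalk (T.path l l')
    ((T.refine hx hy hxy hdeg).isTree.isAcyclic.support_subset_of_isPath hp _ hz)

theorem displaysSet_refine {Q : Set (Quartet L)} (hQ : T.DisplaysSet Q) :
    (T.refine hx hy hxy hdeg).DisplaysSet Q := by
  classical
  intro q hq p r hp hr
  have hinl : ∀ t, .inl t ∈ p.support → .inl t ∉ r.support := fun t htp htr => by
    obtain ⟨t₁, ht₁, h₁⟩ :=
      (exists_mem_path_of_mem_support_refine hx hy hxy hdeg hp htp).resolve_right Sum.inl_ne_inr
    obtain ⟨t₂, ht₂, h₂⟩ :=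
      (exists_mem_path_of_mem_support_refine hx hy hxy hdeg hr htr).resolve_right Sum.inl_ne_inr
    cases h₁
    cases h₂
    exact hQ q hq _ _ (T.path_isPath _ _) (T.path_isPath _ _) t ht₁ ht₂
  rintro (t | ⟨⟩) hzp hzr
  · exact hinl t hzp hzr
  -- The new vertex would be an inner vertex of both paths, each of which then uses two of its
  -- three neighbours; so the paths share a neighbour, which is an old vertex.
  have hN : ∀ c : T.V ⊕ Unit, (T.refine hx hy hxy hdeg).G.Adj (.inr ()) c →
      c = .inl v ∨ c = .inl x ∨ c = .inl y := fun c hc => by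
    have : c ∈ (T.refineGraph v x y).neighborSet (.inr ()) := hc
    rwa [neighborSet_refineGraph_inr, Set.mem_insert_iff, Set.mem_insert_iff,
      Set.mem_singleton_iff] at this
  have hcommon : ∀ c : T.V ⊕ Unit, c ∈ p.support → c ∈ r.support →
      ¬ (T.refine hx hy hxy hdeg).G.Adj (.inr ()) c := fun c hcp hcr hc => by
    rcases hN c hc with rfl | rfl | rfl <;> exact hinl _ hcp hcr
  obtain ⟨s, s', hss', hs, hs', hsp, hs'p⟩ :=
    hp.exists_adj_ne_of_mem_support hzp Sum.inr_ne_inl Sum.inr_ne_inl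
  obtain ⟨t, t', htt', ht, ht', htr, ht'r⟩ :=
    hr.exists_adj_ne_of_mem_support hzr Sum.inr_ne_inl Sum.inr_ne_inl
  have := hN s hs
  have := hN s' hs'
  have := hN t ht
  have := hN t' ht'
  rcases (by grind : s = t ∨ s = t' ∨ s' = t ∨ s' = t') with h | h | h | h <;> subst h
  exacts [hcommon _ hsp htr hs, hcommon _ hsp ht'r hs, hcommon _ hs'p htr hs',
    hcommon _ hs'p ht'r hs']

end Refine

section Count

theorem finite_label (T : PhyloTree L) : Finite L :=
  Finite.of_injective T.leaf T.leaf_inj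

theorem ncard_isInterior_add_card : {v | T.IsInterior v}.ncard + Nat.card L = Nat.card T.V := by
  have := T.finite_label
  have hcompl : {v | T.IsInterior v} = (Set.range T.leaf)ᶜ := by
    ext v
    simp [IsInterior]
  rw [hcompl, ← Set.ncard_range_of_injective T.leaf_inj, add_comm, Set.ncard_add_ncard_compl]

theorem Binary.ncard_isInterior_add_two {T : PhyloTree L} (hT : T.Binary) :
    {v | T.IsInterior v}.ncard + 2 = Nat.card L := by
  classical
  have := Fintype.ofFinite T.V
  have hdeg : ∀ v, (T.G.neighborSet v).ncard = if T.IsInterior v then 3 else 1 := fun v => by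
    split_ifs with hv
    · exact hT v hv
    · obtain ⟨l, rfl⟩ := not_not.mp hv
      exact T.leaf_deg l
  have hsum := T.G.sum_ncard_neighborSet
  simp only [hdeg, Finset.sum_ite, Finset.sum_const, smul_eq_mul, mul_one] at hsum
  have hsplit := Finset.card_filter_add_card_filter_not (s := Finset.univ) (T.IsInterior ·)
  have hI : {v | T.IsInterior v}.ncard = (Finset.univ.filter (T.IsInterior ·)).card := by
    rw [Set.ncard_eq_toFinset_card', Set.toFinset_ofPred]
  have := T.isTree.ncard_edgeSet_add_one
  have := T.ncard_isInterior_add_card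
  rw [Finset.card_univ, ← Nat.card_eq_fintype_card] at hsplit
  omega

noncomputable def leafNbr (l : L) : T.V :=
  (Set.ncard_eq_one.mp (T.leaf_deg l)).choose

theorem neighborSet_leaf (l : L) : T.G.neighborSet (T.leaf l) = {T.leafNbr l} :=
  (Set.ncard_eq_one.mp (T.leaf_deg l)).choose_spec

theorem adj_leafNbr (l : L) : T.G.Adj (T.leaf l) (T.leafNbr l) := by
  change _ ∈ T.G.neighborSet _
  simp [neighborSet_leaf]

theorem eq_leafNbr_of_adj {l : L} {v : T.V} (h : T.G.Adj (T.leaf l) v) : v = T.leafNbr l := by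
  change v ∈ T.G.neighborSet _ at h
  simpa [neighborSet_leaf] using h

noncomputable def pendantEdge (l : L) : Sym2 T.V := s(T.leaf l, T.leafNbr l)

/-- Two adjacent leaves would form a whole connected component, leaving no room for a third. -/
theorem not_adj_leaf_leaf (hL : 3 ≤ Nat.card L) (l l' : L) :
    ¬ T.G.Adj (T.leaf l) (T.leaf l') := by
  intro h
  have := T.finite_label
  have hpair : ({l, l'} : Set L).ncard ≤ 2 := (Set.ncard_insert_le _ _).trans (by simp)
  obtain ⟨l₃, -, hl₃⟩ := Set.exists_mem_notMem_of_ncard_lt_ncard (s := {l, l'}) (t := Set.univ)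
    (hpair.trans_lt (by rw [Set.ncard_univ]; omega))
  have hclosed : ∀ a ∈ ({T.leaf l, T.leaf l'} : Set T.V), ∀ b, T.G.Adj a b →
      b ∈ ({T.leaf l, T.leaf l'} : Set T.V) := by
    rintro a (rfl | rfl) b hb
    · simp [eq_leafNbr_of_adj T hb, ← eq_leafNbr_of_adj T h]
    · simp [eq_leafNbr_of_adj T hb, ← eq_leafNbr_of_adj T h.symm]
  have := (T.isTree.connected (T.leaf l) (T.leaf l₃)).some.mem_of_forall_adj_mem hclosed
    (Set.mem_insert _ _)
  simp only [Set.mem_insert_iff, Set.mem_singleton_iff, T.leaf_inj.eq_iff] at this hl₃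
  tauto

theorem setOf_interiorEdge_eq :
    {e | T.InteriorEdge e} = T.G.edgeSet \ Set.range T.pendantEdge := by
  ext e
  simp only [Set.mem_ofPred_eq, InteriorEdge, Set.mem_sdiff, Set.mem_range, not_exists]
  refine and_congr_right fun he => ⟨fun hint l hl => hint _ (hl ▸ Sym2.mem_mk_left _ _) ⟨l, rfl⟩,
    fun hnp v hv ⟨l, hl⟩ => hnp l ?_⟩
  subst hl
  induction e with
  | _ a b =>
    rcases Sym2.mem_iff.mp hv with rfl | rfl
    · rw [pendantEdge, ← eq_leafNbr_of_adj T he]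
    · rw [pendantEdge, ← eq_leafNbr_of_adj T he.symm, Sym2.eq_swap]

theorem Binary.ncard_interiorEdge_add_three {T : PhyloTree L} (hT : T.Binary)
    (hL : 3 ≤ Nat.card L) :
    {e | T.InteriorEdge e}.ncard + 3 = Nat.card L := by
  have hinj : Function.Injective T.pendantEdge := fun l l' h => by
    rcases Sym2.eq_iff.mp h with ⟨h, -⟩ | ⟨h, -⟩
    · exact T.leaf_inj h
    · by_contra hne
      exact T.not_adj_leaf_leaf hL l' l (h ▸ T.adj_leafNbr l')
  have hsub : Set.range T.pendantEdge ⊆ T.G.edgeSet := by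
    rintro _ ⟨l, rfl⟩
    exact T.adj_leafNbr l
  rw [setOf_interiorEdge_eq]
  have := Set.ncard_sdiff_add_ncard_of_subset hsub
  rw [Set.ncard_range_of_injective hinj] at this
  have := T.isTree.ncard_edgeSet_add_one
  have := T.ncard_isInterior_add_card
  have := hT.ncard_isInterior_add_two
  omega

end Count

section Defines

variable {T}

theorem Defines.binary {Q : Set (Quartet L)} (hQ : Defines Q T) : T.Binary := by
  intro v hv
  by_contra hne
  have hdeg : 4 ≤ (T.G.neighborSet v).ncard := by
    have := T.interior_deg v hv
    omega
  obtain ⟨x, hx, y, hy, hxy⟩ :=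
    (Set.one_lt_ncard (s := T.G.neighborSet v) (Set.toFinite _)).mp (by omega)
  obtain ⟨φ, -⟩ := hQ.2 _ (displaysSet_refine hx hy hxy hdeg hQ.1)
  have := Nat.card_congr φ
  rw [card_refine hx hy hxy hdeg] at this
  omega

theorem Defines.exists_crosses {Q : Set (Quartet L)} (hQ : Defines Q T) {e : Sym2 T.V}
    (he : T.InteriorEdge e) : ∃ q ∈ Q, T.Crosses q e := by
  induction e with
  | _ a b =>
    by_contra! hcross
    have ha := he.2 a (Sym2.mem_mk_left a b)
    have hb := he.2 b (Sym2.mem_mk_right a b)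
    obtain ⟨φ, -⟩ := hQ.2 _ (displaysSet_contract he.1 ha hb hQ.1 hcross)
    have := Nat.card_congr φ
    have := card_contract_add_one he.1 ha hb
    omega

theorem DisplaysQ.eq_of_crosses {q : Quartet L} (hq : T.DisplaysQ q) {e e' : Sym2 T.V}
    (he : e ∈ T.G.edgeSet) (he' : e' ∈ T.G.edgeSet) (h : T.Crosses q e) (h' : T.Crosses q e') :
    e = e' := by
  obtain ⟨a, b, rfl, ha, hb⟩ := h
  obtain ⟨a', b', rfl, ha', hb'⟩ := h'
  exact T.isTree.isAcyclic.eq_of_adj_of_disjoint _ _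
    (hq _ _ (T.path_isPath _ _) (T.path_isPath _ _)) he he' ha hb ha' hb'

theorem Defines.ncard_interiorEdge_le {Q : Finset (Quartet L)} (hQ : Defines ↑Q T) :
    {e | T.InteriorEdge e}.ncard ≤ Q.card := by
  rw [Set.ncard_eq_toFinset_card _ (Set.toFinite _)]
  refine Finset.card_le_card_of_forall_subsingleton (fun e q => T.Crosses q e)
    (fun e he => hQ.exists_crosses (by simpa using he)) fun q hq e he e' he' => ?_
  simp only [Set.mem_ofPred_eq, Set.Finite.mem_toFinset] at he he'
  exact (hQ.1 q hq).eq_of_crosses he.1.1 he'.1.1 he.2 he'.2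

end Defines

end PhyloTree

theorem stmt10_general {n : ℕ} (Q : Finset (PhyloTree.Quartet (Fin n)))
    (hdef : ∃ T : PhyloTree (Fin n), PhyloTree.Defines (↑Q) T) :
    n - 3 ≤ Q.card := by
  obtain ⟨T, hT⟩ := hdef
  rcases lt_or_ge n 3 with hn | hn
  · omega
  have hcount := hT.binary.ncard_interiorEdge_add_three (by rwa [Nat.card_fin])
  rw [Nat.card_fin] at hcount
  have := hT.ncard_interiorEdge_le
  omega

/-- Every definitive quartet set on leaf set `{1,…,n}` (`n ≥ 4`) contains at
least `n - 3` quartets. -/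
theorem stmt10 {n : ℕ} (hn : 4 ≤ n) (Q : Finset (PhyloTree.Quartet (Fin n)))
    (hcov : ∀ l : Fin n, ∃ q ∈ Q, l ∈ PhyloTree.qLeaves q)
    (hdef : ∃ T : PhyloTree (Fin n), PhyloTree.Defines (↑Q) T) :
    n - 3 ≤ Q.card :=
  stmt10_general Q hdef
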